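/- arXiv:2012.07361 — 6 statements merged into one kernel-verified Lean document; each statement's English description precedes it below -/
import Mathlib

section
/- Over the field F_p(λ, μ) of rational functions in two variables over F_p, the p×p matrices A (upper bidiagonal with λ on the diagonal and entries 1, 2, ..., p-1 on the superdiagonal) and B (with μ in the top-right corner and 1's on the subdiagonal, zeros elsewhere) satisfy AB - BA = I_p. -/
/-- The field `F_p(λ, μ)` of rational functions in two variables over `F_p`. -/
abbrev RatFunc2 (p : ℕ) : Type := FractionRing (MvPolynomial (Fin 2) (ZMod p))

noncomputable def lamVar (p : ℕ) : RatFunc2 p :=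
  algebraMap (MvPolynomial (Fin 2) (ZMod p)) (RatFunc2 p) (MvPolynomial.X 0)

noncomputable def muVar (p : ℕ) : RatFunc2 p :=
  algebraMap (MvPolynomial (Fin 2) (ZMod p)) (RatFunc2 p) (MvPolynomial.X 1)

/-- The `p×p` matrix with `λ` on the diagonal and `1, 2, …, p-1` on the superdiagonal. -/
noncomputable def matA (p : ℕ) : Matrix (Fin p) (Fin p) (RatFunc2 p) :=
  Matrix.of fun i j =>
    if i = j then lamVar p
    else if (j : ℕ) = (i : ℕ) + 1 then (((i : ℕ) + 1 : ℕ) : RatFunc2 p)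
    else 0

/-- The `p×p` matrix with `μ` in the top-right corner and `1`'s on the subdiagonal. -/
noncomputable def matB (p : ℕ) : Matrix (Fin p) (Fin p) (RatFunc2 p) :=
  Matrix.of fun i j =>
    if (i : ℕ) = 0 ∧ (j : ℕ) = p - 1 then muVar p
    else if (i : ℕ) = (j : ℕ) + 1 then 1
    else 0

/-!
Over any commutative ring `R` in which `p = 0`, let `t` act on `R[t]/(t^p - μ)` by multiplication;
in the basis `1, t, …, t^(p-1)` this is the matrix `B`. Since `d/dt (t^p - μ) = p t^(p-1) = 0`,
differentiation descends to this quotient, with matrix `N` (superdiagonal `1, …, p-1`), and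
`A = λ + N`. The Leibniz rule gives `[d/dt, t] = 1`. Concretely, `N B = diag(i + 1)` and
`B N = diag(i)`, the last entry of `N B` being `p = 0`.
-/

open Matrix

theorem Fin.sum_ite_val_eq {M : Type*} [AddCommMonoid M] (p n : ℕ) (c : M) :
    (∑ k : Fin p, if (k : ℕ) = n then c else 0) = if n < p then c else 0 := by
  rw [Fin.sum_univ_eq_sum_range (fun k => if k = n then c else 0), Finset.sum_ite_eq']
  simp only [Finset.mem_range]

def derivMatrix (R : Type*) [CommRing R] (p : ℕ) : Matrix (Fin p) (Fin p) R :=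
  of fun i j => if (j : ℕ) = (i : ℕ) + 1 then (((i : ℕ) + 1 : ℕ) : R) else 0

def twistedShiftMatrix {R : Type*} [CommRing R] (p : ℕ) (m : R) : Matrix (Fin p) (Fin p) R :=
  of fun i j =>
    if (i : ℕ) = 0 ∧ (j : ℕ) = p - 1 then m
    else if (i : ℕ) = (j : ℕ) + 1 then 1
    else 0

section WeylRelation

variable {R : Type*} [CommRing R] {p : ℕ}

theorem derivMatrix_mul_twistedShiftMatrix (hp : (p : R) = 0) (m : R) :
    derivMatrix R p * twistedShiftMatrix p m = diagonal fun i : Fin p => ((i : ℕ) + 1 : R) := by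
  ext i j
  have hterm : ∀ k : Fin p, derivMatrix R p i k * twistedShiftMatrix p m k j
      = if (k : ℕ) = i + 1 then (if i = j then ((i : ℕ) + 1 : R) else 0) else 0 := by
    intro k
    simp only [derivMatrix, twistedShiftMatrix, of_apply, Fin.ext_iff]
    split_ifs <;> first | omega | simp
  rw [mul_apply, Finset.sum_congr rfl fun k _ => hterm k, Fin.sum_ite_val_eq, diagonal_apply]
  split_ifs with hlt hij <;> try rfl
  have hip : (i : ℕ) + 1 = p := by omega
  rw [← Nat.cast_add_one, hip, hp]

theorem twistedShiftMatrix_mul_derivMatrix (m : R) :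
    twistedShiftMatrix p m * derivMatrix R p = diagonal fun i : Fin p => ((i : ℕ) : R) := by
  ext i j
  have hterm : ∀ k : Fin p, twistedShiftMatrix p m i k * derivMatrix R p k j
      = if (k : ℕ) = i - 1 then (if i = j then ((i : ℕ) : R) else 0) else 0 := by
    intro k
    simp only [derivMatrix, twistedShiftMatrix, of_apply, Fin.ext_iff]
    split_ifs <;> first
      | omega
      | simp [show (i : ℕ) = 0 by omega]
      | simp [show (i : ℕ) = k + 1 by omega]
      | simp
  rw [mul_apply, Finset.sum_congr rfl fun k _ => hterm k, Fin.sum_ite_val_eq,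
    if_pos (by omega), diagonal_apply]

theorem smul_one_add_derivMatrix_mul_twistedShiftMatrix_sub (hp : (p : R) = 0) (l m : R) :
    (l • 1 + derivMatrix R p) * twistedShiftMatrix p m
      - twistedShiftMatrix p m * (l • 1 + derivMatrix R p) = 1 := by
  rw [add_mul, mul_add, derivMatrix_mul_twistedShiftMatrix hp, twistedShiftMatrix_mul_derivMatrix,
    smul_one_mul, mul_smul_one, add_sub_add_left_eq_sub, diagonal_sub]
  simp only [add_sub_cancel_left, diagonal_one]

end WeylRelation

instance RatFunc2.charP (p : ℕ) : CharP (RatFunc2 p) p :=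
  charP_of_injective_algebraMap (IsFractionRing.injective (MvPolynomial (Fin 2) (ZMod p)) _) p

theorem matA_eq_smul_one_add_derivMatrix (p : ℕ) :
    matA p = lamVar p • 1 + derivMatrix (RatFunc2 p) p := by
  ext i j
  simp only [matA, derivMatrix, of_apply, Matrix.add_apply, Matrix.smul_apply, one_apply, smul_eq_mul]
  split_ifs <;> first | omega | simp_all

theorem matB_eq_twistedShiftMatrix (p : ℕ) : matB p = twistedShiftMatrix p (muVar p) := rfl

theorem stmt_1_general (p : ℕ) :
    matA p * matB p - matB p * matA p = 1 := by
  rw [matA_eq_smul_one_add_derivMatrix, matB_eq_twistedShiftMatrix]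
  exact smul_one_add_derivMatrix_mul_twistedShiftMatrix_sub (CharP.cast_eq_zero _ p) _ _

theorem stmt_1 (p : ℕ) [Fact p.Prime] :
    matA p * matB p - matB p * matA p = 1 :=
  stmt_1_general p
end

section
/- Let M_1, M_2, M_3 be invertible k×k matrices over a field F. The 3k×3k block matrix [[I_k, I_k, I_k], [M_1, 0, M_3], [0, M_2, I_k]] has rank equal to 2k + rank(M_1 + M_3·M_2 - M_1·M_2). -/
/-!
Block row operations (subtract `M₁` times the first block row and `M₃ - M₁` times the third
from the second, then negate it) followed by block column operations clearing the first and
third block rows turn the matrix into `diag(I, S, I)` with `S = M₁ + M₃ M₂ - M₁ M₂`.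
Both operations are invertible, and the rank of a block diagonal matrix is the sum of the
ranks of its blocks.
-/

open Matrix Module

theorem Submodule.finrank_prod {K V W : Type*} [DivisionRing K] [AddCommGroup V] [Module K V]
    [AddCommGroup W] [Module K W] [FiniteDimensional K V] [FiniteDimensional K W]
    (p : Submodule K V) (q : Submodule K W) :
    finrank K (p.prod q) = finrank K p + finrank K q := by
  rw [← Module.finrank_prod, ← LinearMap.finrank_range_of_inj (f := p.subtype.prodMap q.subtype)
    (Prod.map_injective.2 ⟨p.injective_subtype, q.injective_subtype⟩), LinearMap.range_prodMap,
    Submodule.range_subtype, Submodule.range_subtype]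

def sumSumEquivFinThreeProd (n : Type*) : n ⊕ (n ⊕ n) ≃ Fin 3 × n where
  toFun := Sum.elim (0, ·) (Sum.elim (1, ·) (2, ·))
  invFun p := ![Sum.inl, Sum.inr ∘ Sum.inl, Sum.inr ∘ Sum.inr] p.1 p.2
  left_inv := by rintro (x | x | x) <;> rfl
  right_inv := by rintro ⟨i, x⟩; fin_cases i <;> rfl

namespace Matrix

variable {K : Type*} [Field K]

theorem rank_fromBlocks_zero_zero {m m' n n' : Type*} [Fintype m] [Fintype m'] [Fintype n]
    [Fintype n'] (A : Matrix m m' K) (D : Matrix n n' K) :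
    (fromBlocks A 0 0 D).rank = A.rank + D.rank := by
  have hmulVec : (fromBlocks A 0 0 D).mulVecLin =
      (LinearEquiv.sumArrowLequivProdArrow m n K K).symm.toLinearMap ∘ₗ
        (A.mulVecLin.prodMap D.mulVecLin) ∘ₗ
          (LinearEquiv.sumArrowLequivProdArrow m' n' K K).toLinearMap := by
    ext x (i | i) <;> simp [fromBlocks_mulVec] <;> rfl
  rw [rank, hmulVec, LinearMap.range_comp,
    LinearMap.range_comp_of_range_eq_top _ (LinearEquiv.range _), LinearEquiv.finrank_map_eq,
    LinearMap.range_prodMap, Submodule.finrank_prod]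
  rfl

theorem rank_comp_blockDiag_fin_three {n n' : Type*} [Fintype n] [Fintype n']
    (A B C : Matrix n n' K) :
    (comp (Fin 3) (Fin 3) n n' K !![A, 0, 0; 0, B, 0; 0, 0, C]).rank =
      A.rank + B.rank + C.rank := by
  have hblocks : (comp (Fin 3) (Fin 3) n n' K !![A, 0, 0; 0, B, 0; 0, 0, C]).submatrix
      (sumSumEquivFinThreeProd n) (sumSumEquivFinThreeProd n') =
        fromBlocks A 0 0 (fromBlocks B 0 0 C) := by
    ext (i | i | i) (j | j | j) <;> rfl
  rw [← rank_submatrix _ (sumSumEquivFinThreeProd n) (sumSumEquivFinThreeProd n'), hblocks,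
    rank_fromBlocks_zero_zero, rank_fromBlocks_zero_zero, add_assoc]

theorem rank_comp_mul_mul_of_isUnit {I n : Type*} [Fintype I] [DecidableEq I] [Fintype n]
    [DecidableEq n] {P Q : Matrix I I (Matrix n n K)} (hP : IsUnit P) (hQ : IsUnit Q)
    (B : Matrix I I (Matrix n n K)) :
    (comp I I n n K (P * B * Q)).rank = (comp I I n n K B).rank := by
  have hdet {U : Matrix I I (Matrix n n K)} (hU : IsUnit U) :
      IsUnit (compRingEquiv I n K U).det :=
    (isUnit_iff_isUnit_det _).1 (hU.map (compRingEquiv I n K))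
  simp only [← compRingEquiv_apply, map_mul]
  rw [rank_mul_eq_left_of_isUnit_det _ _ (hdet hQ), rank_mul_eq_right_of_isUnit_det _ _ (hdet hP)]

section BlockOperations

variable {n : Type*} [Fintype n] [DecidableEq n]

theorem rowOps_mul_mul_colOps (M₁ M₂ M₃ : Matrix n n K) :
    !![1, 0, 0; M₁, -1, M₃ - M₁; 0, 0, 1] * !![1, 1, 1; M₁, 0, M₃; 0, M₂, 1] *
      !![1, M₂ - 1, -1; 0, 1, 0; 0, -M₂, 1] =
        !![1, 0, 0; 0, M₁ + M₃ * M₂ - M₁ * M₂, 0; 0, 0, 1] := by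
  ext i j : 1
  fin_cases i <;> fin_cases j <;> simp <;> noncomm_ring

theorem isUnit_rowOps (M₁ M₃ : Matrix n n K) :
    IsUnit !![(1 : Matrix n n K), 0, 0; M₁, -1, M₃ - M₁; 0, 0, 1] := by
  refine .of_mul_eq_one !![1, 0, 0; M₁, -1, M₃ - M₁; 0, 0, 1] ?_
  ext i j : 1
  fin_cases i <;> fin_cases j <;> simp

theorem isUnit_colOps (M₂ : Matrix n n K) :
    IsUnit !![1, M₂ - 1, -1; 0, 1, 0; 0, -M₂, 1] := by
  refine .of_mul_eq_one !![1, 1, 1; 0, 1, 0; 0, M₂, 1] ?_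
  ext i j : 1
  fin_cases i <;> fin_cases j <;> simp; noncomm_ring

theorem rank_comp_blockMatrix (M₁ M₂ M₃ : Matrix n n K) :
    (comp (Fin 3) (Fin 3) n n K !![1, 1, 1; M₁, 0, M₃; 0, M₂, 1]).rank =
      2 * Fintype.card n + (M₁ + M₃ * M₂ - M₁ * M₂).rank := by
  rw [← rank_comp_mul_mul_of_isUnit (isUnit_rowOps M₁ M₃) (isUnit_colOps M₂),
    rowOps_mul_mul_colOps, rank_comp_blockDiag_fin_three, rank_one]
  ring

end BlockOperations

end Matrix

theorem stmt_5_general {F : Type} [Field F] (k : ℕ)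
    (M₁ M₂ M₃ : Matrix (Fin k) (Fin k) F) :
    (Matrix.of fun (q : Fin 3 × Fin k) (r : Fin 3 × Fin k) =>
        (![![1, 1, 1], ![M₁, 0, M₃], ![0, M₂, 1]] :
          Fin 3 → Fin 3 → Matrix (Fin k) (Fin k) F) q.1 r.1 q.2 r.2).rank
      = 2 * k + (M₁ + M₃ * M₂ - M₁ * M₂).rank :=
  (Matrix.rank_comp_blockMatrix M₁ M₂ M₃).trans (by rw [Fintype.card_fin])

theorem stmt_5 {F : Type} [Field F] (k : ℕ) (hk : 1 ≤ k)
    (M₁ M₂ M₃ : Matrix (Fin k) (Fin k) F)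
    (h₁ : IsUnit M₁) (h₂ : IsUnit M₂) (h₃ : IsUnit M₃) :
    (Matrix.of fun (q : Fin 3 × Fin k) (r : Fin 3 × Fin k) =>
        (![![1, 1, 1], ![M₁, 0, M₃], ![0, M₂, 1]] :
          Fin 3 → Fin 3 → Matrix (Fin k) (Fin k) F) q.1 r.1 q.2 r.2).rank
      = 2 * k + (M₁ + M₃ * M₂ - M₁ * M₂).rank :=
  stmt_5_general k M₁ M₂ M₃
end

section
/- Every finitely generated subgroup of GL_n(F) for a field F is residually finite (Mal'cev's theorem). -/
/-!
A finitely generated subgroup of `GL_n(A)` lies in `GL_n(R)`, where `R` is the finitely generated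
`ℤ`-algebra spanned by the entries of the generators and of their inverses. Such an `R` is a
Jacobson ring whose residue fields are finite (Zariski's lemma over `ℤ`). When `A` is reduced so is
`R`, hence its maximal ideals meet in `0`: for `g ≠ 1` a nonzero entry of `g - 1` avoids some
maximal ideal `m`, and reduction modulo `m` maps `g` nontrivially into the finite `GL_n(R/m)`.
-/

universe u v

namespace Group.ResiduallyFinite

theorem exists_finite_monoidHom {G : Type u} [Group G] [ResiduallyFinite G] {g : G}
    (hg : g ≠ 1) : ∃ (H : Type u) (_ : Group H) (φ : G →* H), Finite H ∧ φ g ≠ 1 := by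
  obtain ⟨N, hgN⟩ := exists_finiteIndexNormalSubgroup_notMem g hg
  refine ⟨G ⧸ N.toSubgroup, inferInstance, QuotientGroup.mk' _, inferInstance, ?_⟩
  rwa [ne_eq, QuotientGroup.mk'_apply, QuotientGroup.eq_one_iff]

theorem of_injective {G : Type u} {G' : Type v} [Group G] [Group G'] [ResiduallyFinite G']
    {f : G →* G'} (hf : Function.Injective f) : ResiduallyFinite G := by
  refine residuallyFinite_of_forall_exists_finite_monoidHom.{u, v} fun g hg => ?_
  obtain ⟨H, _, φ, hH, hφ⟩ := exists_finite_monoidHom ((map_ne_one_iff f hf).mpr hg)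
  exact ⟨H, _, hH, φ.comp f, hφ⟩

end Group.ResiduallyFinite

theorem Int.jacobson_bot : (⊥ : Ideal ℤ).jacobson = ⊥ := by
  refine eq_bot_iff.mpr fun x hx => Ideal.mem_bot.mpr ?_
  -- `x ^ 2 + 1` is a unit of `ℤ` only for `x = 0`
  rcases Int.isUnit_iff.mp (Ideal.mem_jacobson_bot.mp hx x) with h | h <;> nlinarith

instance Int.isJacobsonRing : IsJacobsonRing ℤ := by
  refine isJacobsonRing_iff_prime_eq.mpr fun P hP => ?_
  rcases eq_or_ne P ⊥ with rfl | hP0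
  · exact Int.jacobson_bot
  · have := IsPrime.to_maximal_ideal hP0
    exact Ideal.jacobson_eq_self_of_isMaximal

theorem finite_of_moduleFinite_int (K : Type*) [Field K] [Module.Finite ℤ K] : Finite K := by
  obtain ⟨p, hp⟩ := CharP.exists K
  rcases CharP.char_is_prime_or_zero K p with hprime | rfl
  · refine Module.finite_of_fg_torsion K fun x => ⟨⟨p, mem_nonZeroDivisors_of_ne_zero ?_⟩, ?_⟩
    · exact_mod_cast hprime.ne_zero
    · simp [zsmul_eq_mul]
  · have : CharZero K := CharP.charP_to_charZero K
    have : Algebra.IsIntegral ℤ K := Algebra.IsIntegral.of_finite ℤ K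
    exact absurd (isField_of_isIntegral_of_isField (algebraMap ℤ K).injective_int
      (Field.toIsField K)) Int.not_isField

theorem Ideal.finite_quotient_of_finiteType_int {R : Type*} [CommRing R] [Algebra.FiniteType ℤ R]
    (m : Ideal R) [m.IsMaximal] : Finite (R ⧸ m) :=
  letI := Ideal.Quotient.field m
  have := finite_of_finite_type_of_isJacobsonRing ℤ (R ⧸ m)
  finite_of_moduleFinite_int (R ⧸ m)

theorem Ideal.exists_isMaximal_notMem_of_isJacobsonRing {R : Type*} [CommRing R]
    [IsJacobsonRing R] [IsReduced R] {a : R} (ha : a ≠ 0) :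
    ∃ m : Ideal R, m.IsMaximal ∧ a ∉ m := by
  have hjac : (⊥ : Ideal R).jacobson = ⊥ := IsJacobsonRing.out ‹_› Ideal.isRadical_bot
  have ha' : a ∉ (⊥ : Ideal R).jacobson := by rwa [hjac, Ideal.mem_bot]
  simp only [Ideal.jacobson, bot_le, true_and, Submodule.mem_sInf, Set.mem_ofPred_eq,
    not_forall] at ha'
  obtain ⟨m, hm, ham⟩ := ha'
  exact ⟨m, hm, ham⟩

theorem Matrix.GeneralLinearGroup.residuallyFinite {n R : Type*} [Fintype n] [DecidableEq n]
    [CommRing R] [IsReduced R] [Algebra.FiniteType ℤ R] : Group.ResiduallyFinite (GL n R) := by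
  have : IsJacobsonRing R := isJacobsonRing_of_finiteType (A := ℤ)
  refine Group.residuallyFinite_of_forall_exists_finite_monoidHom fun g hg => ?_
  obtain ⟨i, j, hij⟩ : ∃ i j, ((g : Matrix n n R) - 1) i j ≠ 0 := by
    by_contra! h
    exact hg (Units.ext (sub_eq_zero.mp (Matrix.ext h)))
  obtain ⟨m, hm, hijm⟩ := Ideal.exists_isMaximal_notMem_of_isJacobsonRing hij
  have := Ideal.finite_quotient_of_finiteType_int m
  refine ⟨_, _, inferInstance, Units.map (Ideal.Quotient.mk m).mapMatrix.toMonoidHom,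
    fun h => hijm ?_⟩
  have hm1 : (Ideal.Quotient.mk m).mapMatrix ((g : Matrix n n R) - 1) = 0 := by
    rw [map_sub, map_one, sub_eq_zero]
    exact congr_arg Units.val h
  exact Ideal.Quotient.eq_zero_iff_mem.mp (congr_fun (congr_fun hm1 i) j)

theorem Units.mem_range_map_of_injective {M N : Type*} [Monoid M] [Monoid N] {f : M →* N}
    (hf : Function.Injective f) {u : Nˣ} (hu : (u : N) ∈ Set.range f)
    (hu' : ((u⁻¹ : Nˣ) : N) ∈ Set.range f) : u ∈ (Units.map f).range := by
  obtain ⟨a, ha⟩ := hu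
  obtain ⟨b, hb⟩ := hu'
  exact ⟨⟨a, b, hf (by simp [ha, hb]), hf (by simp [ha, hb])⟩, Units.ext ha⟩

theorem Matrix.mem_range_map_val {n R A : Type*} [CommSemiring R] [Semiring A] [Algebra R A]
    {S : Subalgebra R A} {M : Matrix n n A} (hM : ∀ i j, M i j ∈ S) :
    M ∈ Set.range (Matrix.map · S.val) :=
  ⟨fun i j => ⟨M i j, hM i j⟩, rfl⟩

section

variable {n A : Type*} [Fintype n] [DecidableEq n] [CommRing A]

theorem Subgroup.FG.exists_finiteType_le_range_units_map {G : Subgroup (GL n A)} (hG : G.FG) :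
    ∃ R : Subalgebra ℤ A, Algebra.FiniteType ℤ R ∧
      G ≤ (Units.map (R.val.mapMatrix (m := n) : Matrix n n R →* Matrix n n A)).range := by
  obtain ⟨S, rfl⟩ := hG
  let entries : Set A :=
    ⋃ g ∈ S, ⋃ i, ⋃ j, {(g : Matrix n n A) i j, ((g⁻¹ : GL n A) : Matrix n n A) i j}
  have hfin : entries.Finite :=
    S.finite_toSet.biUnion fun _ _ => Set.finite_iUnion fun _ => Set.finite_iUnion fun _ =>
      Set.toFinite _
  refine ⟨Algebra.adjoin ℤ entries, .adjoin_of_finite hfin, Subgroup.closure_le _ |>.mpr ?_⟩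
  intro g hg
  refine Units.mem_range_map_of_injective (Matrix.map_injective Subtype.val_injective) ?_ ?_
  all_goals refine Matrix.mem_range_map_val fun i j => Algebra.subset_adjoin ?_
  all_goals simp only [entries, Set.mem_iUnion]
  exacts [⟨g, hg, i, j, .inl rfl⟩, ⟨g, hg, i, j, .inr rfl⟩]

theorem Matrix.GeneralLinearGroup.residuallyFinite_of_fg [IsReduced A] {G : Subgroup (GL n A)}
    (hG : G.FG) : Group.ResiduallyFinite G := by
  obtain ⟨R, hR, hle⟩ := hG.exists_finiteType_le_range_units_map
  have : IsReduced R := isReduced_of_injective R.val Subtype.val_injective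
  have : Group.ResiduallyFinite (GL n R) := Matrix.GeneralLinearGroup.residuallyFinite
  have hinj : Function.Injective
      (Units.map (R.val.mapMatrix (m := n) : Matrix n n R →* Matrix n n A)) :=
    Units.map_injective (Matrix.map_injective Subtype.val_injective)
  let e := MonoidHom.ofInjective hinj
  exact .of_injective (f := e.symm.toMonoidHom.comp (Subgroup.inclusion hle))
    (e.symm.injective.comp (Subgroup.inclusion_injective hle))

end

theorem stmt_9_general {F : Type} [Field F] (n : ℕ)
    (G : Subgroup (GL (Fin n) F)) (hG : Group.FG G) :
    ∀ g : G, g ≠ 1 →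
      ∃ (H : Type) (_ : Group H) (φ : G →* H), Finite H ∧ φ g ≠ 1 := by
  have := Matrix.GeneralLinearGroup.residuallyFinite_of_fg ((Group.fg_iff_subgroup_fg G).mp hG)
  exact fun g hg => Group.ResiduallyFinite.exists_finite_monoidHom hg

theorem stmt_9 {F : Type} [Field F] (n : ℕ) (hn : 1 ≤ n)
    (G : Subgroup (GL (Fin n) F)) (hG : Group.FG G) :
    ∀ g : G, g ≠ 1 →
      ∃ (H : Type) (_ : Group H) (φ : G →* H), Finite H ∧ φ g ≠ 1 :=
  stmt_9_general n G hG
end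

section
/- Let D be a division ring and let O, a, b, c, d be five points in the projective plane DP² such that O, a, b are collinear and distinct, O, c, d are collinear and distinct, and the lines through {O,a,b} and {O,c,d} are distinct. Then there is a projective transformation of DP² (induced by an invertible 3×3 matrix acting on the left) taking O, a, b, c, d to [1:0:0], [1:1:0], [0:1:0], [1:0:1], [0:0:1] respectively. -/
/-- Three vectors of `D³` (viewed as a *right* `D`-vector space) are right
linearly dependent. -/
def RightDep {D : Type} [DivisionRing D] (u v w : Fin 3 → D) : Prop :=
  ∃ l₁ l₂ l₃ : D, ¬ (l₁ = 0 ∧ l₂ = 0 ∧ l₃ = 0) ∧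
    (fun i => u i * l₁ + v i * l₂ + w i * l₃) = 0

/-- Two nonzero vectors represent the same point of the right projective plane:
they differ by a right scalar. -/
def RightProp {D : Type} [DivisionRing D] (u v : Fin 3 → D) : Prop :=
  ∃ l : D, l ≠ 0 ∧ v = fun i => u i * l

/-!
Collinearity of `O, a, b` together with their distinctness lets one write `a = O α + b β` with
`α, β ≠ 0`, and likewise `c = O γ + d δ`. As `O, b, d` are right independent, the matrix with
columns `O, b, d` has injective, hence (by finite dimensionality over `Dᵐᵒᵖ`) surjective,
`mulVec`, so it is invertible; its inverse sends `O, b, d` to the standard basis and `a, c` to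
`(α, β, 0)` and `(γ, 0, δ)`. Rescaling the rows by `α⁻¹, β⁻¹, α⁻¹ γ δ⁻¹` gives the normal form.
-/

open MulOpposite Matrix

instance {R : Type*} [Semiring R] : Module.Finite Rᵐᵒᵖ R :=
  .of_surjective (LinearMap.toSpanSingleton Rᵐᵒᵖ R 1) fun x => ⟨op x, by simp⟩

theorem Matrix.isUnit_of_injective_mulVec {K m : Type*} [DivisionRing K] [Fintype m]
    [DecidableEq m] {A : Matrix m m K} (h : Function.Injective A.mulVec) : IsUnit A := by
  let f : (m → K) →ₗ[Kᵐᵒᵖ] (m → K) :=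
    { toFun := A.mulVec, map_add' := A.mulVec_add, map_smul' := A.mulVec_smul }
  obtain ⟨B, hB⟩ := mulVec_surjective_iff_exists_right_inverse.mp
    ((LinearMap.injective_iff_surjective (f := f)).mp h)
  exact .of_mul_eq_one B hB

section

variable {D : Type} [DivisionRing D]

theorem rightDep_iff_op_smul {u v w : Fin 3 → D} : RightDep u v w ↔
    ∃ l₁ l₂ l₃ : D, ¬ (l₁ = 0 ∧ l₂ = 0 ∧ l₃ = 0) ∧ op l₁ • u + op l₂ • v + op l₃ • w = 0 :=
  Iff.rfl

theorem rightProp_iff_op_smul {u v : Fin 3 → D} :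
    RightProp u v ↔ ∃ l : D, l ≠ 0 ∧ v = op l • u :=
  Iff.rfl

theorem rightProp_of_op_smul_add_op_smul_eq_zero {u v : Fin 3 → D} {l m : D}
    (hu : u ≠ 0) (hv : v ≠ 0) (hlm : ¬ (l = 0 ∧ m = 0)) (h : op l • u + op m • v = 0) :
    RightProp u v := by
  have hm : m ≠ 0 := by
    rintro rfl
    have hl : l ≠ 0 := fun hl => hlm ⟨hl, rfl⟩
    simp [hl, hu] at h
  have hl : l ≠ 0 := by
    rintro rfl
    simp [hm, hv] at h
  refine rightProp_iff_op_smul.mpr ⟨-l * m⁻¹, by simp [hl, hm], ?_⟩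
  have h' : op m • v = -(op l • u) := eq_neg_of_add_eq_zero_right h
  rw [← eq_inv_smul_iff₀ (op_ne_zero_iff m |>.mpr hm)] at h'
  rw [h', smul_neg, smul_smul, ← op_inv, ← op_mul, ← neg_smul, ← op_neg, neg_mul]

theorem exists_eq_op_smul_add_op_smul {O a b : Fin 3 → D} (hO : O ≠ 0) (ha : a ≠ 0) (hb : b ≠ 0)
    (hdep : RightDep O a b) (hOa : ¬ RightProp O a) (hOb : ¬ RightProp O b)
    (hab : ¬ RightProp a b) :
    ∃ α β : D, α ≠ 0 ∧ β ≠ 0 ∧ a = op α • O + op β • b := by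
  obtain ⟨l₁, l₂, l₃, hl, h⟩ := rightDep_iff_op_smul.mp hdep
  have hl₂ : l₂ ≠ 0 := by
    rintro rfl
    exact hOb (rightProp_of_op_smul_add_op_smul_eq_zero (l := l₁) (m := l₃) hO hb (by tauto)
      (by simpa using h))
  have hl₁ : l₁ ≠ 0 := by
    rintro rfl
    exact hab (rightProp_of_op_smul_add_op_smul_eq_zero (l := l₂) (m := l₃) ha hb (by tauto)
      (by simpa using h))
  have hl₃ : l₃ ≠ 0 := by
    rintro rfl
    exact hOa (rightProp_of_op_smul_add_op_smul_eq_zero (l := l₁) (m := l₂) hO ha (by tauto)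
      (by simpa using h))
  refine ⟨-l₁ * l₂⁻¹, -l₃ * l₂⁻¹, by simp [hl₁, hl₂], by simp [hl₃, hl₂], ?_⟩
  have h' : op l₂ • a = -(op l₁ • O + op l₃ • b) := by
    rw [← sub_eq_zero, ← h]; abel
  rw [← eq_inv_smul_iff₀ (op_ne_zero_iff l₂ |>.mpr hl₂)] at h'
  rw [h', smul_neg, smul_add, smul_smul, smul_smul, ← op_inv, ← op_mul, ← op_mul, neg_add,
    ← neg_smul, ← neg_smul, ← op_neg, ← op_neg, neg_mul, neg_mul]

theorem exists_isUnit_mulVec_eq_of_not_rightDep {u v w : Fin 3 → D} (h : ¬ RightDep u v w) :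
    ∃ M : Matrix (Fin 3) (Fin 3) D, IsUnit M ∧
      M *ᵥ u = ![1, 0, 0] ∧ M *ᵥ v = ![0, 1, 0] ∧ M *ᵥ w = ![0, 0, 1] := by
  set P : Matrix (Fin 3) (Fin 3) D := (of ![u, v, w])ᵀ
  have hP : ∀ x, P *ᵥ x = op (x 0) • u + op (x 1) • v + op (x 2) • w := by
    intro x; ext i; simp [P, mulVec, dotProduct, Fin.sum_univ_three]
  have hinj : Function.Injective P.mulVec := by
    intro x y hxy
    by_contra hne
    refine h (rightDep_iff_op_smul.mpr ⟨x 0 - y 0, x 1 - y 1, x 2 - y 2, fun hz => hne ?_, ?_⟩)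
    · simp only [sub_eq_zero] at hz
      ext i; fin_cases i <;> simp [hz]
    · have hsub := hP (x - y)
      rw [mulVec_sub, hxy, sub_self] at hsub
      exact hsub.symm
  obtain ⟨U, hU⟩ := isUnit_of_injective_mulVec hinj
  have hUP : ∀ x, (↑U⁻¹ : Matrix (Fin 3) (Fin 3) D) *ᵥ (P *ᵥ x) = x := by
    intro x; rw [mulVec_mulVec, ← hU, Units.inv_mul, one_mulVec]
  refine ⟨_, U⁻¹.isUnit, ?_, ?_, ?_⟩
  · simpa [hP] using hUP ![1, 0, 0]
  · simpa [hP] using hUP ![0, 1, 0]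
  · simpa [hP] using hUP ![0, 0, 1]

end

theorem stmt_13 {D : Type} [DivisionRing D] (O a b c d : Fin 3 → D)
    (hO : O ≠ 0) (ha : a ≠ 0) (hb : b ≠ 0) (hc : c ≠ 0) (hd : d ≠ 0)
    -- O, a, b are collinear and represent pairwise distinct projective points
    (hOab : RightDep O a b) (hOa : ¬ RightProp O a) (hOb : ¬ RightProp O b)
    (hab : ¬ RightProp a b)
    -- O, c, d are collinear and represent pairwise distinct projective points
    (hOcd : RightDep O c d) (hOc : ¬ RightProp O c) (hOd : ¬ RightProp O d)
    (hcd : ¬ RightProp c d)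
    -- the two lines are distinct
    (hlines : ¬ RightDep O b d) :
    ∃ (M : Matrix (Fin 3) (Fin 3) D), IsUnit M ∧
      ∃ (sO sa sb sc sd : Dˣ),
        M.mulVec O = ![(sO : D), 0, 0] ∧
        M.mulVec a = ![(sa : D), (sa : D), 0] ∧
        M.mulVec b = ![0, (sb : D), 0] ∧
        M.mulVec c = ![(sc : D), 0, (sc : D)] ∧
        M.mulVec d = ![0, 0, (sd : D)] := by
  obtain ⟨α, β, hα, hβ, rfl⟩ := exists_eq_op_smul_add_op_smul hO ha hb hOab hOa hOb hab
  obtain ⟨γ, δ, hγ, hδ, rfl⟩ := exists_eq_op_smul_add_op_smul hO hc hd hOcd hOc hOd hcd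
  obtain ⟨M, hM, hMO, hMb, hMd⟩ := exists_isUnit_mulVec_eq_of_not_rightDep hlines
  set s : Fin 3 → D := ![α⁻¹, β⁻¹, α⁻¹ * γ * δ⁻¹]
  have hs : IsUnit s := Pi.isUnit_iff.mpr fun i => by
    fin_cases i <;> simp [s, hα, hβ, hγ, hδ]
  refine ⟨diagonal s * M, (hs.map (diagonalRingHom (Fin 3) D)).mul hM,
    .mk0 α⁻¹ (by simpa), 1, .mk0 β⁻¹ (by simpa), .mk0 (α⁻¹ * γ) (by simp [hα, hγ]),
    .mk0 (α⁻¹ * γ * δ⁻¹) (by simp [hα, hγ, hδ]), ?_, ?_, ?_, ?_, ?_⟩ <;>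
  ext i <;> fin_cases i <;>
    simp [s, ← mulVec_mulVec, mulVec_add, mulVec_smul, mulVec_diagonal, hMO, hMb, hMd, hα, hβ, hδ,
      mul_assoc]
end

section
/- Let D be a division ring and a_i, a_j, a_k ∈ D. The three vectors (1, a_i, 0), (1, 0, a_k), (0, a_j, −1) in D³ (as a right D-vector space) are right linearly dependent if and only if a_i = a_j · a_k. -/
/-!
Coordinatewise, a vanishing combination `v₁ l₁ + v₂ l₂ + v₃ l₃` forces `l₂ = -l₁` and
`l₃ = -ak l₁`, leaving the single condition `(ai - aj ak) l₁ = 0` from the middle coordinate.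
Since `l₁ = 0` kills the whole relation and `D` has no zero divisors, a nontrivial relation
exists exactly when `ai - aj ak = 0`.
-/

variable {D : Type*} [DivisionRing D]

theorem combination_eq_zero_iff (ai aj ak l₁ l₂ l₃ : D) :
    (fun t => ![(1 : D), ai, 0] t * l₁ + ![(1 : D), 0, ak] t * l₂ +
        ![(0 : D), aj, -1] t * l₃) = 0 ↔
      l₂ = -l₁ ∧ l₃ = -(ak * l₁) ∧ (ai - aj * ak) * l₁ = 0 := by
  simp only [funext_iff, Fin.forall_fin_succ, IsEmpty.forall_iff, and_true, Fin.isValue,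
    Matrix.cons_val_zero, Matrix.cons_val_one, Matrix.cons_val, Fin.succ_zero_eq_one,
    Fin.succ_one_eq_two, one_mul, zero_mul, add_zero, zero_add, neg_mul, Pi.zero_apply]
  have middle_coord : ai * l₁ + aj * -(ak * l₁) = (ai - aj * ak) * l₁ := by noncomm_ring
  constructor
  · rintro ⟨h₀, h₁, h₂⟩
    obtain rfl : l₂ = -l₁ := eq_neg_of_add_eq_zero_right h₀
    obtain rfl : l₃ = -(ak * l₁) := ((add_neg_eq_zero.mp h₂).symm.trans (mul_neg ..))
    exact ⟨rfl, rfl, middle_coord ▸ h₁⟩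
  · rintro ⟨rfl, rfl, h⟩
    exact ⟨add_neg_cancel l₁, middle_coord ▸ h, by rw [mul_neg, add_neg_cancel]⟩

theorem stmt_14 {D : Type} [DivisionRing D] (ai aj ak : D) :
    (∃ l₁ l₂ l₃ : D, ¬ (l₁ = 0 ∧ l₂ = 0 ∧ l₃ = 0) ∧
        (fun t => ![(1 : D), ai, 0] t * l₁ + ![(1 : D), 0, ak] t * l₂ +
          ![(0 : D), aj, -1] t * l₃) = 0)
      ↔ ai = aj * ak := by
  simp only [combination_eq_zero_iff]
  constructor
  · rintro ⟨l₁, l₂, l₃, hne, rfl, rfl, h⟩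
    have hl₁ : l₁ ≠ 0 := fun h₀ => hne ⟨h₀, by simp [h₀], by simp [h₀]⟩
    exact sub_eq_zero.mp ((mul_eq_zero.mp h).resolve_right hl₁)
  · intro h
    exact ⟨1, -1, -ak, fun h₀ => one_ne_zero h₀.1, rfl, by simp, by simp [h]⟩
end

section
/- Let D be a division ring and a_i, a_j, a_k ∈ D. The three vectors (1, a_i, 0), (1, a_k, 1), (0, a_j, −1) in the right D-vector space D³ are right linearly dependent if and only if a_i = a_j + a_k. -/
theorem staudt_combination_eq {D : Type*} [Ring D] (ai aj ak l₁ l₂ l₃ : D) :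
    (fun t => ![(1 : D), ai, 0] t * l₁ + ![(1 : D), ak, 1] t * l₂ +
        ![(0 : D), aj, -1] t * l₃) =
      ![l₁ + l₂, ai * l₁ + ak * l₂ + aj * l₃, l₂ - l₃] := by
  ext t
  fin_cases t <;> simp [sub_eq_add_neg]

theorem staudt_combination_eq_zero_iff {D : Type*} [Ring D] (ai aj ak l₁ l₂ l₃ : D) :
    (fun t => ![(1 : D), ai, 0] t * l₁ + ![(1 : D), ak, 1] t * l₂ +
        ![(0 : D), aj, -1] t * l₃) = 0 ↔
      l₁ = -l₂ ∧ l₃ = l₂ ∧ (aj + ak - ai) * l₂ = 0 := by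
  simp only [staudt_combination_eq, Matrix.cons_eq_zero_iff, Matrix.zero_empty, and_true]
  constructor
  · rintro ⟨h₁, h₂, h₃⟩
    obtain rfl : l₁ = -l₂ := eq_neg_of_add_eq_zero_left h₁
    obtain rfl : l₃ = l₂ := (sub_eq_zero.mp h₃).symm
    refine ⟨rfl, rfl, ?_⟩
    rw [← h₂]
    noncomm_ring
  · rintro ⟨rfl, rfl, h⟩
    refine ⟨neg_add_cancel _, ?_, sub_self _⟩
    rw [← h]
    noncomm_ring

theorem stmt_15 {D : Type} [DivisionRing D] (ai aj ak : D) :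
    (∃ l₁ l₂ l₃ : D, ¬ (l₁ = 0 ∧ l₂ = 0 ∧ l₃ = 0) ∧
        (fun t => ![(1 : D), ai, 0] t * l₁ + ![(1 : D), ak, 1] t * l₂ +
          ![(0 : D), aj, -1] t * l₃) = 0)
      ↔ ai = aj + ak := by
  simp only [staudt_combination_eq_zero_iff]
  constructor
  · rintro ⟨l₁, l₂, l₃, hne, rfl, h₃, h⟩
    subst l₃
    have hl₂ : l₂ ≠ 0 := fun h₀ => hne ⟨by simp [h₀], h₀, h₀⟩
    exact (sub_eq_zero.mp ((mul_eq_zero.mp h).resolve_right hl₂)).symm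
  · intro h
    exact ⟨-1, 1, 1, by simp, by simp, rfl, by simp [h]⟩
end
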